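/- Reparametrization theorem, estimate at the averaged point: There exists a constant c₀ > 0, depending only on m, n, Q, r − s and r/s, such that whenever hypothesis (H) holds and N : Σ → 𝒜_Q(ℝ^{m+n}) is the well-defined map N(p) := ∑_{v ∈ κ_p, |v| < c₀} M(p+v)⟦v⟧, the following holds: if x ∈ B_s and (x, η(f(x))) = p + v for some p ∈ Σ and v ∈ κ_p, then 𝒢(N(p), Q⟦v⟧) ≤ 2√Q · 𝒢(f(x), Q⟦η(f(x))⟧). -/

import Mathlib

open scoped BigOperators
open Metric MeasureTheory Asymptotics
open scoped Classical

noncomputable section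

/-- `Euc n` is the Euclidean space `ℝⁿ`. -/
abbrev Euc (n : ℕ) : Type := EuclideanSpace ℝ (Fin n)

/-- Two `Q`-tuples of points are identified when they differ by a permutation of the indices. -/
def QPerm (α : Type*) (Q : ℕ) : Setoid (Fin Q → α) where
  r f g := ∃ σ : Equiv.Perm (Fin Q), f = g ∘ σ
  iseqv := by
    refine ⟨fun f => ⟨Equiv.refl _, rfl⟩, ?_, ?_⟩
    · rintro f g ⟨σ, rfl⟩
      exact ⟨σ.symm, by ext i; simp⟩
    · rintro f g h ⟨σ, rfl⟩ ⟨ρ, rfl⟩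
      exact ⟨σ.trans ρ, by ext i; simp⟩

/-- The space `𝒜_Q(α)` of `Q`-points of `α`: unordered `Q`-tuples of points of `α`. -/
abbrev AQ (α : Type*) (Q : ℕ) : Type _ := Quotient (QPerm α Q)

/-- The `Q`-point `∑_l ⟦f l⟧`. -/
def AQmk {α : Type*} {Q : ℕ} (f : Fin Q → α) : AQ α Q := Quotient.mk (QPerm α Q) f

/-- `𝒢` computed on representatives: `min_{σ ∈ 𝒫_Q} (∑_l ‖v_l - w_{σ(l)}‖²)^{1/2}`. -/
def Gfun {α : Type*} [NormedAddCommGroup α] {Q : ℕ} (f g : Fin Q → α) : ℝ :=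
  ⨅ σ : Equiv.Perm (Fin Q), Real.sqrt (∑ l, ‖f l - g (σ l)‖ ^ 2)

/-- The metric `𝒢` on `𝒜_Q(α)`; it is computed on (arbitrary) representatives, which is
well posed since `Gfun` is invariant under permutations of either argument. -/
def Gdist {α : Type*} [NormedAddCommGroup α] {Q : ℕ} (T₁ T₂ : AQ α Q) : ℝ :=
  Gfun T₁.out T₂.out

/-- The multiplicity `Θ_T(v)` of the value `v` in the `Q`-point `T`. -/
def Theta {α : Type*} {Q : ℕ} (T : AQ α Q) (v : α) : ℕ :=
  {l : Fin Q | T.out l = v}.ncard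

/-- The support `spt(T) = {v_1, …, v_Q}` of a `Q`-point. -/
def AQspt {α : Type*} {Q : ℕ} (T : AQ α Q) : Set α := Set.range T.out

/-- The center of mass `η(T) := Q⁻¹ ∑_l v_l` of a `Q`-point. -/
def AQeta {α : Type*} [AddCommGroup α] [Module ℝ α] {Q : ℕ} (T : AQ α Q) : α :=
  (Q : ℝ)⁻¹ • ∑ l, T.out l

/-- `ℝ^{m+n} = ℝ^m × ℝ^n` with the Euclidean (L²) norm. -/
abbrev EucP (m n : ℕ) : Type := WithLp 2 (Euc m × Euc n)

/-- The point of `ℝ^{m+n}` with horizontal part `x` and vertical part `y`. -/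
def mkP {m n : ℕ} (x : Euc m) (y : Euc n) : EucP m n :=
  (WithLp.equiv 2 (Euc m × Euc n)).symm (x, y)

/-- Orthogonal projection `p_{π₀}` of `ℝ^{m+n}` onto `ℝ^m × {0} ≃ ℝ^m`. -/
def projH {m n : ℕ} (ξ : EucP m n) : Euc m := (WithLp.equiv 2 (Euc m × Euc n) ξ).1

/-- Orthogonal projection `p_{π₀^⊥}` of `ℝ^{m+n}` onto `{0} × ℝ^n ≃ ℝ^n`. -/
def projV {m n : ℕ} (ξ : EucP m n) : Euc n := (WithLp.equiv 2 (Euc m × Euc n) ξ).2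

/-- The linear map `τ ↦ (τ, A τ)`, whose range is the tangent plane of a graph. -/
def graphMap {m n : ℕ} (A : Euc m →L[ℝ] Euc n) : Euc m →ₗ[ℝ] EucP m n :=
  (WithLp.linearEquiv 2 ℝ (Euc m × Euc n)).symm.toLinearMap.comp
    ((LinearMap.id : Euc m →ₗ[ℝ] Euc m).prod (A : Euc m →ₗ[ℝ] Euc n))

/-- The graph parametrization `Φ(x) := (x, φ(x))`. -/
def Phi {m n : ℕ} (φ : Euc m → Euc n) (x : Euc m) : EucP m n := mkP x (φ x)

/-- The tangent space `T_{Φ(x)} Gr(φ) = {(τ, Dφ(x)·τ) : τ ∈ ℝ^m}` of the graph of `φ`. -/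
def tangentSpace {m n : ℕ} (φ : Euc m → Euc n) (x : Euc m) : Submodule ℝ (EucP m n) :=
  LinearMap.range (graphMap (fderiv ℝ φ x))

/-- `v ∈ κ_{Φ(x)}`: `v` is orthogonal to the tangent space of the graph of `φ` at `Φ(x)`. -/
def IsNormalAt {m n : ℕ} (φ : Euc m → Euc n) (x : Euc m) (v : EucP m n) : Prop :=
  v ∈ (tangentSpace φ x)ᗮ

/-- The multiplicity function `M(ξ) := Θ_{f(p_{π₀}(ξ))}(p_{π₀^⊥}(ξ))` of the multisection
associated to the `Q`-valued function `f`. -/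
def Mmap {m n Q : ℕ} (f : Euc m → AQ (Euc n) Q) (ξ : EucP m n) : ℕ :=
  Theta (f (projH ξ)) (projV ξ)

/-- Hypothesis (H): `φ` is `C³` on `B_s`, `f` is `L`-Lipschitz on `B_r` (w.r.t. `𝒢`), and
`‖φ‖_{C²} + Lip(f) ≤ c₀`, `‖φ‖_{C⁰} + ‖f‖_{C⁰} ≤ c₀ s`. -/
def HypH {m n Q : ℕ} (s r c₀ L : ℝ) (φ : Euc m → Euc n) (f : Euc m → AQ (Euc n) Q) : Prop :=
  0 ≤ L ∧ ContDiffOn ℝ 3 φ (ball (0 : Euc m) s) ∧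
  (∀ x ∈ ball (0 : Euc m) r, ∀ y ∈ ball (0 : Euc m) r, Gdist (f x) (f y) ≤ L * dist x y) ∧
  (∀ x ∈ ball (0 : Euc m) s,
    ‖φ x‖ + ‖fderiv ℝ φ x‖ + ‖fderiv ℝ (fderiv ℝ φ) x‖ + L ≤ c₀) ∧
  (∀ x ∈ ball (0 : Euc m) s, ∀ y ∈ ball (0 : Euc m) r,
    ‖φ x‖ + Gdist (f y) (AQmk (fun _ => (0 : Euc n))) ≤ c₀ * s)

/-- `T = N(Φ(x))`: `T` is the `Q`-point of `ℝ^{m+n}` whose multiplicity at each `v` equals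
`M(Φ(x)+v)` when `v` is a normal vector to the graph of `φ` at `Φ(x)` with `|v| < c₀`, and
vanishes otherwise.  This characterizes the reparametrizing normal vector field `N`. -/
def IsNField {m n Q : ℕ} (c₀ : ℝ) (φ : Euc m → Euc n) (f : Euc m → AQ (Euc n) Q)
    (x : Euc m) (T : AQ (EucP m n) Q) : Prop :=
  ∀ v : EucP m n, Theta T v =
    if IsNormalAt φ x v ∧ ‖v‖ < c₀ then Mmap f (Phi φ x + v) else 0

/-- The set `M_p` (for `p = Φ(x)`) of the points `p + v`, `v ∈ κ_p`, `|v| < c₀`, of the fiber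
of the tubular neighborhood over `p` carrying positive multiplicity. -/
def MsetAt {m n Q : ℕ} (c₀ : ℝ) (φ : Euc m → Euc n) (f : Euc m → AQ (Euc n) Q)
    (x : Euc m) : Set (EucP m n) :=
  {ξ | ∃ v : EucP m n, IsNormalAt φ x v ∧ ‖v‖ < c₀ ∧ ξ = Phi φ x + v ∧ 0 < Mmap f ξ}

/-!
Take `c₀ = min (1/4) (r - s)`. A sheet `w` of `N(Φ(y))` is a normal vector at `Φ(y)` such that
`Φ(y) + w = (x', u)` with `u` a value of `f(x')`. Since `w - v` is normal to a graph of slope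
at most `c₀`, its horizontal part `x' - x` is at most `c₀` times its vertical part `u - η(f(x))`.
The Lipschitz bound puts `u` within `L |x' - x| ≤ c₀² |u - η(f(x))|` of a value of `f(x)`, which
lies within `𝒢(f(x), Q⟦η(f(x))⟧)` of `η(f(x))`; absorbing the small term gives
`|w - v| ≤ 2 𝒢(f(x), Q⟦η(f(x))⟧)` for every sheet, and summing over the `Q` sheets gives `√Q`.
-/

section QPoints

variable {α : Type*} {Q : ℕ}

lemma Theta_pos_iff (T : AQ α Q) (v : α) : 0 < Theta T v ↔ ∃ l, T.out l = v := by
  rw [Theta, Set.ncard_pos (Set.toFinite _)]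
  rfl

lemma AQmk_const_out (v : α) (k : Fin Q) : (AQmk (Q := Q) fun _ => v).out k = v := by
  obtain ⟨σ, hσ⟩ := Quotient.mk_out (s := QPerm α Q) (fun _ => v)
  exact congrFun hσ k

variable [NormedAddCommGroup α]

lemma Gfun_nonneg (f g : Fin Q → α) : 0 ≤ Gfun f g :=
  Real.iInf_nonneg fun _ => Real.sqrt_nonneg _

lemma Gdist_nonneg (T₁ T₂ : AQ α Q) : 0 ≤ Gdist T₁ T₂ :=
  Gfun_nonneg _ _

lemma Gfun_le (f g : Fin Q → α) (σ : Equiv.Perm (Fin Q)) :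
    Gfun f g ≤ Real.sqrt (∑ l, ‖f l - g (σ l)‖ ^ 2) :=
  ciInf_le ⟨0, by rintro _ ⟨_, rfl⟩; exact Real.sqrt_nonneg _⟩ σ

lemma exists_norm_sub_le_Gfun (f g : Fin Q → α) (l : Fin Q) :
    ∃ k, ‖f l - g k‖ ≤ Gfun f g := by
  obtain ⟨σ, hσ⟩ := Finite.exists_min
    fun σ : Equiv.Perm (Fin Q) => Real.sqrt (∑ j, ‖f j - g (σ j)‖ ^ 2)
  refine ⟨σ l, le_ciInf fun τ => le_trans ?_ (hσ τ)⟩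
  rw [← Real.sqrt_sq (norm_nonneg (f l - g (σ l)))]
  exact Real.sqrt_le_sqrt <| Finset.single_le_sum (f := fun j => ‖f j - g (σ j)‖ ^ 2)
    (fun j _ => sq_nonneg _) (Finset.mem_univ l)

lemma norm_out_sub_le_Gdist_const (T : AQ α Q) (v : α) (k : Fin Q) :
    ‖T.out k - v‖ ≤ Gdist T (AQmk fun _ => v) := by
  obtain ⟨j, hj⟩ := exists_norm_sub_le_Gfun T.out (AQmk (Q := Q) fun _ => v).out k
  rwa [AQmk_const_out] at hj

lemma norm_out_sub_le_Gdist_add_Gdist_const (T₁ T₂ : AQ α Q) (v : α) (k : Fin Q) :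
    ‖T₁.out k - v‖ ≤ Gdist T₁ T₂ + Gdist T₂ (AQmk fun _ => v) := by
  obtain ⟨j, hj⟩ := exists_norm_sub_le_Gfun T₁.out T₂.out k
  calc ‖T₁.out k - v‖ ≤ ‖T₁.out k - T₂.out j‖ + ‖T₂.out j - v‖ :=
        norm_sub_le_norm_sub_add_norm_sub _ _ _
    _ ≤ Gdist T₁ T₂ + Gdist T₂ (AQmk fun _ => v) :=
      add_le_add hj (norm_out_sub_le_Gdist_const T₂ v j)

lemma Gdist_AQmk_const_le {T : AQ α Q} {v : α} {C : ℝ} (hC : 0 ≤ C)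
    (h : ∀ l, ‖T.out l - v‖ ≤ C) : Gdist T (AQmk fun _ => v) ≤ Real.sqrt Q * C := by
  refine (Gfun_le _ _ (Equiv.refl _)).trans ?_
  rw [← Real.sqrt_sq hC, ← Real.sqrt_mul (Nat.cast_nonneg _)]
  refine Real.sqrt_le_sqrt ?_
  calc ∑ l, ‖T.out l - (AQmk (Q := Q) fun _ => v).out (Equiv.refl _ l)‖ ^ 2
      = ∑ l, ‖T.out l - v‖ ^ 2 := by simp only [AQmk_const_out]
    _ ≤ ∑ _l : Fin Q, C ^ 2 :=
      Finset.sum_le_sum fun l _ => pow_le_pow_left₀ (norm_nonneg _) (h l) 2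
    _ = Q * C ^ 2 := by simp

end QPoints

section Graphs

variable {m n : ℕ}

lemma norm_sq_eq_norm_projH_sq_add_norm_projV_sq (ξ : EucP m n) :
    ‖ξ‖ ^ 2 = ‖projH ξ‖ ^ 2 + ‖projV ξ‖ ^ 2 :=
  WithLp.prod_norm_sq_eq_of_L2 ξ

lemma norm_projH_le (ξ : EucP m n) : ‖projH ξ‖ ≤ ‖ξ‖ := by
  have := norm_sq_eq_norm_projH_sq_add_norm_projV_sq ξ
  nlinarith [norm_nonneg (projH ξ), norm_nonneg ξ, sq_nonneg ‖projV ξ‖]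

lemma inner_graphMap (A : Euc m →L[ℝ] Euc n) (τ : Euc m) (ξ : EucP m n) :
    inner ℝ (graphMap A τ) ξ = inner ℝ τ (projH ξ) + inner ℝ (A τ) (projV ξ) :=
  WithLp.prod_inner_apply _ _

lemma norm_projH_le_of_mem_orthogonal_range_graphMap {A : Euc m →L[ℝ] Euc n} {ξ : EucP m n}
    (hξ : ξ ∈ (LinearMap.range (graphMap A))ᗮ) : ‖projH ξ‖ ≤ ‖A‖ * ‖projV ξ‖ := by
  have horth : inner ℝ (graphMap A (projH ξ)) ξ = 0 :=
    (Submodule.mem_orthogonal _ ξ).mp hξ _ ⟨projH ξ, rfl⟩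
  rw [inner_graphMap, real_inner_self_eq_norm_sq] at horth
  have hsq : ‖projH ξ‖ * ‖projH ξ‖ ≤ (‖A‖ * ‖projV ξ‖) * ‖projH ξ‖ :=
    calc ‖projH ξ‖ * ‖projH ξ‖ = -inner ℝ (A (projH ξ)) (projV ξ) := by linarith
      _ ≤ ‖A (projH ξ)‖ * ‖projV ξ‖ := (neg_le_abs _).trans (abs_real_inner_le_norm _ _)
      _ ≤ (‖A‖ * ‖projH ξ‖) * ‖projV ξ‖ := by gcongr; exact A.le_opNorm _
      _ = (‖A‖ * ‖projV ξ‖) * ‖projH ξ‖ := by ring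
  rcases (norm_nonneg (projH ξ)).eq_or_lt with h0 | h0
  · rw [← h0]; positivity
  · exact le_of_mul_le_mul_right hsq h0

lemma projH_Phi_add (φ : Euc m → Euc n) (y : Euc m) (w : EucP m n) :
    projH (Phi φ y + w) = y + projH w := rfl

lemma projV_Phi_add (φ : Euc m → Euc n) (y : Euc m) (w : EucP m n) :
    projV (Phi φ y + w) = φ y + projV w := rfl

end Graphs

/-- `a ≤ L h + G ≤ c² a + G` forces `a ≤ (16/15) G`, and then `h² + a² ≤ (17/16) a² ≤ 2 G²`. -/
lemma sq_add_sq_le_two_mul_sq_of_le_mul_add {c L h a G : ℝ} (hc : c ≤ 1 / 4) (hL : 0 ≤ L)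
    (hLc : L ≤ c) (hh : 0 ≤ h) (ha : 0 ≤ a) (hhc : h ≤ c * a) (haL : a ≤ L * h + G) :
    h ^ 2 + a ^ 2 ≤ 2 * G ^ 2 := by
  have hc2 : c * c ≤ 1 / 16 := by nlinarith
  have hLh : L * h ≤ c * c * a := by nlinarith [mul_le_mul hLc hhc hh (hL.trans hLc)]
  have haG : a ≤ 16 / 15 * G := by nlinarith
  nlinarith

lemma IsNField.out_spec {m n Q : ℕ} {c₀ : ℝ} {φ : Euc m → Euc n} {f : Euc m → AQ (Euc n) Q}
    {y : Euc m} {T : AQ (EucP m n) Q} (hT : IsNField c₀ φ f y T) (l : Fin Q) :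
    IsNormalAt φ y (T.out l) ∧ ‖T.out l‖ < c₀ ∧ 0 < Mmap f (Phi φ y + T.out l) := by
  have hpos := (Theta_pos_iff T (T.out l)).mpr ⟨l, rfl⟩
  rw [hT] at hpos
  split_ifs at hpos with hcond
  · exact ⟨hcond.1, hcond.2, hpos⟩
  · exact absurd hpos (lt_irrefl 0)

lemma norm_sub_le_of_isNormalAt_of_Mmap_pos {m n Q : ℕ} {φ : Euc m → Euc n}
    {f : Euc m → AQ (Euc n) Q} {c L : ℝ} {x y : Euc m} {η : Euc n} {v w : EucP m n}
    (hc : c ≤ 1 / 4) (hL : 0 ≤ L) (hLc : L ≤ c) (hDφ : ‖fderiv ℝ φ y‖ ≤ c)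
    (hv : IsNormalAt φ y v) (hw : IsNormalAt φ y w) (heq : mkP x η = Phi φ y + v)
    (hM : 0 < Mmap f (Phi φ y + w))
    (hlip : Gdist (f (y + projH w)) (f x) ≤ L * dist (y + projH w) x) :
    ‖w - v‖ ≤ 2 * Gdist (f x) (AQmk fun _ => η) := by
  set G := Gdist (f x) (AQmk fun _ => η)
  have hx : projH (w - v) = y + projH w - x := by
    rw [show x = y + projH v from congrArg projH heq, ← sub_sub, add_sub_cancel_left]; rfl
  have hη : projV (w - v) = φ y + projV w - η := by
    rw [show η = φ y + projV v from congrArg projV heq, ← sub_sub, add_sub_cancel_left]; rfl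
  obtain ⟨k, hk⟩ := (Theta_pos_iff _ _).mp hM
  rw [projH_Phi_add, projV_Phi_add] at hk
  have hslope : ‖projH (w - v)‖ ≤ c * ‖projV (w - v)‖ :=
    (norm_projH_le_of_mem_orthogonal_range_graphMap (Submodule.sub_mem _ hw hv)).trans
      (mul_le_mul_of_nonneg_right hDφ (norm_nonneg _))
  have htransfer : ‖projV (w - v)‖ ≤ L * ‖projH (w - v)‖ + G := by
    rw [hη, ← hk, hx, ← dist_eq_norm (y + projH w) x]
    exact (norm_out_sub_le_Gdist_add_Gdist_const _ (f x) η k).trans (by gcongr)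
  have hsq : ‖w - v‖ ^ 2 ≤ (2 * G) ^ 2 := by
    rw [norm_sq_eq_norm_projH_sq_add_norm_projV_sq]
    nlinarith [sq_add_sq_le_two_mul_sq_of_le_mul_add hc hL hLc (norm_nonneg _) (norm_nonneg _)
      hslope htransfer]
  exact le_of_sq_le_sq hsq (by have := Gdist_nonneg (f x) (AQmk fun _ => η); positivity)

theorem reparametrization_estimate_at_averaged_point_general
    (m n Q : ℕ)
    (s r : ℝ) (hsr : s < r) :
    ∃ c₀ : ℝ, 0 < c₀ ∧
      ∀ (φ : Euc m → Euc n) (f : Euc m → AQ (Euc n) Q) (L : ℝ),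
        HypH s r c₀ L φ f →
        ∀ N : Euc m → AQ (EucP m n) Q,
          (∀ x ∈ ball (0 : Euc m) s, IsNField c₀ φ f x (N x)) →
          ∀ x ∈ ball (0 : Euc m) s, ∀ y ∈ ball (0 : Euc m) s, ∀ v : EucP m n,
            IsNormalAt φ y v →
            mkP x (AQeta (f x)) = Phi φ y + v →
            Gdist (N y) (AQmk (fun _ => v))
              ≤ 2 * Real.sqrt Q * Gdist (f x) (AQmk (fun _ => AQeta (f x))) := by
  set c₀ := min (1 / 4 : ℝ) (r - s)
  refine ⟨c₀, lt_min (by norm_num) (by linarith), ?_⟩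
  rintro φ f L ⟨hL, -, hlip, hbound, -⟩ N hN x hx y hy v hv heq
  have hbound_y := hbound y hy
  have hDφ : ‖fderiv ℝ φ y‖ ≤ c₀ := by
    linarith [norm_nonneg (φ y), norm_nonneg (fderiv ℝ (fderiv ℝ φ) y)]
  have hLc : L ≤ c₀ := by
    linarith [norm_nonneg (φ y), norm_nonneg (fderiv ℝ φ y),
      norm_nonneg (fderiv ℝ (fderiv ℝ φ) y)]
  have hxr : x ∈ ball (0 : Euc m) r := ball_subset_ball hsr.le hx
  have hsheet : ∀ l, ‖(N y).out l - v‖ ≤ 2 * Gdist (f x) (AQmk fun _ => AQeta (f x)) := by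
    intro l
    obtain ⟨hw, hwc₀, hM⟩ := (hN y hy).out_spec l
    have hx' : y + projH ((N y).out l) ∈ ball (0 : Euc m) r := by
      rw [mem_ball_zero_iff] at hy ⊢
      linarith [norm_add_le y (projH ((N y).out l)), norm_projH_le ((N y).out l),
        min_le_right (1 / 4 : ℝ) (r - s)]
    exact norm_sub_le_of_isNormalAt_of_Mmap_pos (min_le_left _ _) hL hLc hDφ hv hw heq hM
      (hlip _ hx' x hxr)
  calc Gdist (N y) (AQmk fun _ => v)
      ≤ Real.sqrt Q * (2 * Gdist (f x) (AQmk fun _ => AQeta (f x))) :=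
        Gdist_AQmk_const_le (mul_nonneg zero_le_two (Gdist_nonneg _ _)) hsheet
    _ = _ := by ring

/-- **Reparametrization: estimate at the averaged point.** There is `c₀ > 0`
(depending on `m, n, Q, r-s, r/s`, equivalently on `m, n, Q, s, r`) such that, under
hypothesis (H), the well-defined normal field `N` satisfies: if `x ∈ B_s` and
`(x, η(f(x))) = p + v` with `p = Φ(y) ∈ Σ` and `v ∈ κ_p`, then
`𝒢(N(p), Q⟦v⟧) ≤ 2√Q · 𝒢(f(x), Q⟦η(f(x))⟧)`. -/
theorem reparametrization_estimate_at_averaged_point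
    (m n Q : ℕ) (hm : 0 < m) (hn : 0 < n) (hQ : 0 < Q)
    (s r : ℝ) (hs : 0 < s) (hsr : s < r) (hr : r < 1) :
    ∃ c₀ : ℝ, 0 < c₀ ∧
      ∀ (φ : Euc m → Euc n) (f : Euc m → AQ (Euc n) Q) (L : ℝ),
        HypH s r c₀ L φ f →
        ∀ N : Euc m → AQ (EucP m n) Q,
          (∀ x ∈ ball (0 : Euc m) s, IsNField c₀ φ f x (N x)) →
          ∀ x ∈ ball (0 : Euc m) s, ∀ y ∈ ball (0 : Euc m) s, ∀ v : EucP m n,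
            IsNormalAt φ y v →
            mkP x (AQeta (f x)) = Phi φ y + v →
            Gdist (N y) (AQmk (fun _ => v))
              ≤ 2 * Real.sqrt Q * Gdist (f x) (AQmk (fun _ => AQeta (f x))) :=
  reparametrization_estimate_at_averaged_point_general m n Q s r hsr
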